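/- The map h : ℝ² → ℝ² defined by h(x,y) = (x, y + f(x)) with f(x) = x·sin(ln|x|) for x ≠ 0 and f(0) = 0 is a bi-Lipschitz homeomorphism in a neighborhood of the origin; moreover, for A = ℝ × {0}, one has dim D(A) = 0 and dim D(h(A)) = 1. -/

import Mathlib

open Set Filter Topology Metric MeasureTheory
open scoped NNReal ENNReal

noncomputable section

abbrev E (n : ℕ) : Type := EuclideanSpace ℝ (Fin n)

def toE (n : ℕ) (f : Fin n → ℝ) : E n := WithLp.toLp 2 f

/-- An o-minimal structure on ℝ (Definition 2.4). -/
structure OMinStructure : Type where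
  defin : ∀ n : ℕ, Set (Set (E n))
  union_mem : ∀ {n : ℕ} {A B : Set (E n)}, A ∈ defin n → B ∈ defin n → A ∪ B ∈ defin n
  compl_mem : ∀ {n : ℕ} {A : Set (E n)}, A ∈ defin n → Aᶜ ∈ defin n
  prod_left_mem : ∀ {n : ℕ} {A : Set (E n)}, A ∈ defin n →
    {x : E (n + 1) | toE n (fun i : Fin n => x i.castSucc) ∈ A} ∈ defin (n + 1)
  prod_right_mem : ∀ {n : ℕ} {A : Set (E n)}, A ∈ defin n →
    {x : E (n + 1) | toE n (fun i : Fin n => x i.succ) ∈ A} ∈ defin (n + 1)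
  proj_mem : ∀ {n : ℕ} {A : Set (E (n + 1))}, A ∈ defin (n + 1) →
    {x : E n | ∃ t : ℝ, toE (n + 1) (Fin.snoc (fun j => x j) t) ∈ A} ∈ defin n
  poly_mem : ∀ {n : ℕ} (P : MvPolynomial (Fin n) ℝ),
    {x : E n | MvPolynomial.eval (fun i => x i) P = 0} ∈ defin n
  o_minimal : ∀ {A : Set (E 1)}, A ∈ defin 1 →
    ∃ F : Finset (Set ℝ), (∀ I ∈ F, (∃ a, I = {a}) ∨ (∃ a b, I = Ioo a b) ∨
      (∃ a, I = Iio a) ∨ (∃ a, I = Ioi a) ∨ I = univ) ∧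
      {t : ℝ | toE 1 (fun _ : Fin 1 => t) ∈ A} = ⋃₀ ↑F

/-- Direction set of `A` at `0`. -/
def dirSet {n : ℕ} (A : Set (E n)) : Set (E n) :=
  {a : E n | ‖a‖ = 1 ∧ ∃ x : ℕ → E n, (∀ i, x i ∈ A) ∧ (∀ i, x i ≠ 0) ∧
    Tendsto x atTop (𝓝 0) ∧ Tendsto (fun i => (‖x i‖)⁻¹ • x i) atTop (𝓝 a)}

/-- Real tangent cone `LD(A)`: the half-cone over the direction set. -/
def LD {n : ℕ} (A : Set (E n)) : Set (E n) :=
  {y : E n | ∃ t : ℝ, 0 ≤ t ∧ ∃ a ∈ dirSet A, y = t • a}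

/-- `Φ`: odd, strictly increasing, continuous definable germs `(ℝ,0) → (ℝ,0)`. -/
def IsPhi (S : OMinStructure) (θ : ℝ → ℝ) : Prop :=
  θ 0 = 0 ∧ (∀ t, θ (-t) = - θ t) ∧
  (∃ δ > 0, StrictMonoOn θ (Ioo (-δ) δ) ∧ ContinuousOn θ (Ioo (-δ) δ)) ∧
  {x : E 2 | x 1 = θ (x 0)} ∈ S.defin 2

/-- Sea-tangle neighbourhood of `A` with respect to `θ`. -/
def STN {n : ℕ} (θ : ℝ → ℝ) (A : Set (E n)) : Set (E n) :=
  {x : E n | infDist x A ≤ θ ‖x‖ * ‖x‖}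

/-- `A ⊆ B` as germs at `0`. -/
def GermSub {n : ℕ} (A B : Set (E n)) : Prop :=
  ∃ ε > 0, ∀ x ∈ A, ‖x‖ < ε → x ∈ B

/-- STN-equivalence of set-germs at `0`. -/
def STEquiv (S : OMinStructure) {n : ℕ} (A B : Set (E n)) : Prop :=
  (∃ θ, IsPhi S θ ∧ GermSub B (STN θ A)) ∧ (∃ θ, IsPhi S θ ∧ GermSub A (STN θ B))

/-- `h` is a bi-Lipschitz homeomorphism germ `(ℝⁿ,0) → (ℝⁿ,0)` with constants `K₁ ≤ K₂`. -/
def BiLipWith {n : ℕ} (K₁ K₂ : ℝ) (h : E n → E n) : Prop :=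
  h 0 = 0 ∧ ∃ δ > 0,
    (∀ x ∈ ball (0 : E n) δ, ∀ y ∈ ball (0 : E n) δ,
      K₁ * ‖x - y‖ ≤ ‖h x - h y‖ ∧ ‖h x - h y‖ ≤ K₂ * ‖x - y‖) ∧
    ∃ ε > 0, ball (0 : E n) ε ⊆ h '' ball (0 : E n) δ

/-- Bi-Lipschitz homeomorphism germ `(ℝⁿ,0) → (ℝⁿ,0)`. -/
def BiLipGerm {n : ℕ} (h : E n → E n) : Prop :=
  ∃ K₁ K₂ : ℝ, 0 < K₁ ∧ K₁ ≤ K₂ ∧ BiLipWith K₁ K₂ h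

/-- Sequence selection property. -/
def SSP {n : ℕ} (A : Set (E n)) : Prop :=
  ∀ a : ℕ → E n, (∀ m, a m ≠ 0) → Tendsto a atTop (𝓝 0) →
    (∃ v ∈ dirSet A, Tendsto (fun m => (‖a m‖)⁻¹ • a m) atTop (𝓝 v)) →
    ∃ b : ℕ → E n, (∀ m, b m ∈ A) ∧
      Tendsto (fun m => ‖a m - b m‖ / ‖a m‖) atTop (𝓝 0)

/-- Weak sequence selection property. -/
def WSSP {n : ℕ} (A : Set (E n)) : Prop :=
  ∀ a : ℕ → E n, (∀ m, a m ≠ 0) → Tendsto a atTop (𝓝 0) →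
    (∃ v ∈ dirSet A, Tendsto (fun m => (‖a m‖)⁻¹ • a m) atTop (𝓝 v)) →
    ∃ φ : ℕ → ℕ, StrictMono φ ∧ ∃ b : ℕ → E n, (∀ j, b j ∈ A) ∧
      Tendsto (fun j => ‖a (φ j) - b j‖ / ‖a (φ j)‖) atTop (𝓝 0)

/-- Graph of a self-map of `ℝⁿ`, as a subset of `ℝ^{n+n}`. -/
def graphSet {n : ℕ} (h : E n → E n) : Set (E (n + n)) :=
  {z : E (n + n) | h (toE n (fun i => z (Fin.castAdd n i))) = toE n (fun i => z (Fin.natAdd n i))}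

/-! ### auxiliary: the function `F` -/

noncomputable def Fosc (x : ℝ) : ℝ := x * Real.sin (Real.log |x|)

lemma Fosc_zero : Fosc 0 = 0 := by simp [Fosc]

lemma Fosc_neg (x : ℝ) : Fosc (-x) = - Fosc x := by simp [Fosc]

lemma Fosc_abs_le (x : ℝ) : |Fosc x| ≤ |x| := by
  calc |Fosc x| = |x| * |Real.sin (Real.log |x|)| := abs_mul _ _
  _ ≤ |x| * 1 := by gcongr; exact Real.abs_sin_le_one _
  _ = |x| := mul_one _

lemma Fosc_hasDeriv {x : ℝ} (hx : 0 < x) :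
    HasDerivAt Fosc (Real.sin (Real.log x) + Real.cos (Real.log x)) x := by
  have h1 : HasDerivAt (fun t : ℝ => t * Real.sin (Real.log t))
      (Real.sin (Real.log x) + Real.cos (Real.log x)) x := by
    have hl : HasDerivAt Real.log x⁻¹ x := Real.hasDerivAt_log hx.ne'
    have hs : HasDerivAt (fun t => Real.sin (Real.log t)) (Real.cos (Real.log x) * x⁻¹) x :=
      (Real.hasDerivAt_sin _).comp x hl
    have := (hasDerivAt_id x).fun_mul hs
    refine this.congr_deriv ?_
    simp only [id, one_mul]
    rw [mul_comm (Real.cos _), ← mul_assoc, mul_inv_cancel₀ hx.ne', one_mul]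
  have heq : Fosc =ᶠ[𝓝 x] fun t : ℝ => t * Real.sin (Real.log t) := by
    filter_upwards [eventually_gt_nhds hx] with t ht
    simp [Fosc, abs_of_pos ht]
  exact h1.congr_of_eventuallyEq heq

lemma Fosc_pos_case {x y : ℝ} (hy : 0 ≤ y) (hxy : y ≤ x) : |Fosc x - Fosc y| ≤ 2 * (x - y) := by
  rcases eq_or_lt_of_le hy with h0 | h0
  · subst h0
    rw [Fosc_zero, sub_zero, sub_zero]
    calc |Fosc x| ≤ |x| := Fosc_abs_le x
    _ = x := abs_of_nonneg hxy
    _ ≤ 2 * x := by linarith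
  · have key := norm_image_sub_le_of_norm_deriv_le_segment'
      (f := Fosc) (f' := fun t => Real.sin (Real.log t) + Real.cos (Real.log t)) (C := 2)
      (a := y) (b := x)
      (fun t ht => ((Fosc_hasDeriv (lt_of_lt_of_le h0 ht.1)).hasDerivWithinAt))
      (fun t _ => by
        have := Real.abs_sin_le_one (Real.log t)
        have := Real.abs_cos_le_one (Real.log t)
        rw [Real.norm_eq_abs]
        calc |Real.sin (Real.log t) + Real.cos (Real.log t)| ≤ _ := abs_add_le _ _
        _ ≤ 2 := by linarith)
      x (right_mem_Icc.2 hxy)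
    simpa using key

lemma Fosc_lip (x y : ℝ) : |Fosc x - Fosc y| ≤ 2 * |x - y| := by
  wlog hxy : y ≤ x generalizing x y
  · have := this y x (le_of_not_ge hxy)
    rwa [abs_sub_comm, abs_sub_comm y x] at this
  rw [abs_of_nonneg (by linarith : (0:ℝ) ≤ x - y)]
  rcases le_or_gt 0 y with hy | hy
  · exact Fosc_pos_case hy hxy
  rcases le_or_gt x 0 with hx | hx
  · have := Fosc_pos_case (by linarith : (0:ℝ) ≤ -x) (by linarith : -x ≤ -y)
    rw [Fosc_neg, Fosc_neg] at this
    calc |Fosc x - Fosc y| = |(- Fosc y) - (- Fosc x)| := by congr 1; ring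
    _ ≤ 2 * (-y - -x) := this
    _ = 2 * (x - y) := by ring
  · calc |Fosc x - Fosc y| ≤ |Fosc x| + |Fosc y| := abs_sub _ _
    _ ≤ |x| + |y| := add_le_add (Fosc_abs_le x) (Fosc_abs_le y)
    _ = x - y := by rw [abs_of_pos hx, abs_of_neg hy]; ring
    _ ≤ 2 * (x - y) := by linarith

/-! ### auxiliary: plane geometry -/

noncomputable def mk2 (a b : ℝ) : E 2 := toE 2 ![a, b]

lemma mk2_0 (a b : ℝ) : mk2 a b 0 = a := rfl
lemma mk2_1 (a b : ℝ) : mk2 a b 1 = b := rfl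
lemma E2_sub_apply (x y : E 2) (i : Fin 2) : (x - y) i = x i - y i := rfl
lemma E2_smul_apply (c : ℝ) (x : E 2) (i : Fin 2) : (c • x) i = c * x i := rfl
lemma E2_zero_apply (i : Fin 2) : (0 : E 2) i = 0 := rfl

lemma E2_ext (x y : E 2) (h0 : x 0 = y 0) (h1 : x 1 = y 1) : x = y := by
  ext i; fin_cases i <;> assumption

lemma norm_E2 (x : E 2) : ‖x‖ = Real.sqrt ((x 0)^2 + (x 1)^2) := by
  rw [EuclideanSpace.norm_eq]
  congr 1
  rw [Fin.sum_univ_two]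
  simp [sq_abs]

lemma coord_le_norm (x : E 2) (i : Fin 2) : |x i| ≤ ‖x‖ := by
  rw [norm_E2, ← Real.sqrt_sq_eq_abs]
  apply Real.sqrt_le_sqrt
  fin_cases i
  · exact le_add_of_nonneg_right (sq_nonneg _)
  · exact le_add_of_nonneg_left (sq_nonneg _)

lemma norm_le_coords (x : E 2) : ‖x‖ ≤ |x 0| + |x 1| := by
  rw [norm_E2]
  rw [show |x 0| + |x 1| = Real.sqrt ((|x 0| + |x 1|)^2) from (Real.sqrt_sq (by positivity)).symm]
  apply Real.sqrt_le_sqrt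
  nlinarith [abs_nonneg (x 0), abs_nonneg (x 1), sq_abs (x 0), sq_abs (x 1),
    mul_nonneg (abs_nonneg (x 0)) (abs_nonneg (x 1))]

lemma sin_lip (s t : ℝ) : |Real.sin s - Real.sin t| ≤ |s - t| := by
  rw [Real.sin_sub_sin]
  rw [abs_mul, abs_mul, abs_two]
  calc 2 * |Real.sin ((s - t) / 2)| * |Real.cos ((s + t) / 2)|
      ≤ 2 * |(s - t) / 2| * 1 := by
        have h1 : |Real.sin ((s - t) / 2)| ≤ |(s - t) / 2| := Real.abs_sin_le_abs
        have h2 : |Real.cos ((s + t) / 2)| ≤ 1 := Real.abs_cos_le_one _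
        nlinarith [abs_nonneg (Real.sin ((s - t) / 2)), abs_nonneg ((s - t) / 2),
          abs_nonneg (Real.cos ((s + t) / 2))]
  _ = |s - t| := by rw [abs_div, abs_two]; ring

lemma cos_lip (s t : ℝ) : |Real.cos s - Real.cos t| ≤ |s - t| := by
  rw [Real.cos_sub_cos]
  rw [abs_mul, abs_mul, abs_neg, abs_two]
  calc 2 * |Real.sin ((s + t) / 2)| * |Real.sin ((s - t) / 2)|
      ≤ 2 * 1 * |(s - t) / 2| := by
        have h1 : |Real.sin ((s + t) / 2)| ≤ 1 := Real.abs_sin_le_one _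
        have h2 : |Real.sin ((s - t) / 2)| ≤ |(s - t) / 2| := Real.abs_sin_le_abs
        nlinarith [abs_nonneg (Real.sin ((s + t) / 2)), abs_nonneg ((s - t) / 2),
          abs_nonneg (Real.sin ((s - t) / 2))]
  _ = |s - t| := by rw [abs_div, abs_two]; ring

/-- circle parametrisation -/
noncomputable def circ (t : ℝ) : E 2 := mk2 (Real.cos t) (Real.sin t)

lemma circ_lip : LipschitzWith 2 circ := by
  apply LipschitzWith.of_dist_le_mul
  intro s t
  rw [dist_eq_norm]
  calc ‖circ s - circ t‖ ≤ |(circ s - circ t) 0| + |(circ s - circ t) 1| := norm_le_coords _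
  _ = |Real.cos s - Real.cos t| + |Real.sin s - Real.sin t| := rfl
  _ ≤ |s - t| + |s - t| := add_le_add (cos_lip s t) (sin_lip s t)
  _ = (2:ℝ≥0) * dist s t := by rw [Real.dist_eq]; push_cast; ring

lemma unit_mem_range_circ (a : E 2) (ha : ‖a‖ = 1) : a ∈ range circ := by
  have hsum : (a 0)^2 + (a 1)^2 = 1 := by
    have := norm_E2 a
    rw [ha] at this
    have h2 := congrArg (·^2) this
    simp only at h2
    rwa [Real.sq_sqrt (by positivity), one_pow, eq_comm] at h2
  have h0 : -1 ≤ a 0 := by nlinarith [sq_nonneg (a 1)]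
  have h1 : a 0 ≤ 1 := by nlinarith [sq_nonneg (a 1)]
  have hsin : Real.sin (Real.arccos (a 0)) = |a 1| := by
    rw [Real.sin_arccos, ← Real.sqrt_sq_eq_abs]
    congr 1
    linarith
  rcases le_or_gt 0 (a 1) with hy | hy
  · exact ⟨Real.arccos (a 0), (E2_ext _ _ (by simp [circ, mk2_0, Real.cos_arccos h0 h1])
      (by simp [circ, mk2_1, hsin, abs_of_nonneg hy])).symm⟩
  · refine ⟨-Real.arccos (a 0), (E2_ext _ _ ?_ ?_).symm⟩
    · simp [circ, mk2_0, Real.cos_arccos h0 h1]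
    · simp [circ, mk2_1, hsin, abs_of_neg hy]

lemma dirSet_subset_circle {A : Set (E 2)} : dirSet A ⊆ range circ := fun a ha =>
  unit_mem_range_circ a ha.1

lemma dimH_dirSet_le (A : Set (E 2)) : dimH (dirSet A) ≤ 1 := by
  calc dimH (dirSet A) ≤ dimH (range circ) := dimH_mono dirSet_subset_circle
  _ = dimH (circ '' univ) := by rw [image_univ]
  _ ≤ dimH (univ : Set ℝ) := circ_lip.dimH_image_le univ
  _ = 1 := Real.dimH_univ

/-! ### Part A : bi-Lipschitz -/

lemma partA (f : ℝ → ℝ) (hf0 : f 0 = 0) (hf : ∀ x : ℝ, x ≠ 0 → f x = x * Real.sin (Real.log |x|))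
    (h : E 2 → E 2)
    (hh : ∀ p : E 2, h p = toE 2 (fun i => if i = 0 then p 0 else p 1 + f (p 0))) :
    BiLipGerm h := by
  have hfF : ∀ x, f x = Fosc x := by
    intro x
    rcases eq_or_ne x 0 with rfl | hx
    · rw [hf0, Fosc_zero]
    · rw [hf x hx]; rfl
  have hh0 : ∀ p : E 2, h p 0 = p 0 := fun p => by rw [hh]; rfl
  have hh1 : ∀ p : E 2, h p 1 = p 1 + f (p 0) := fun p => by rw [hh]; rfl
  have hflip : ∀ a b : ℝ, |f a - f b| ≤ 2 * |a - b| := by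
    intro a b; rw [hfF, hfF]; exact Fosc_lip a b
  have hup : ∀ p q : E 2, ‖h p - h q‖ ≤ 4 * ‖p - q‖ := by
    intro p q
    have e0 : (h p - h q) 0 = p 0 - q 0 := by rw [E2_sub_apply, hh0, hh0]
    have e1 : (h p - h q) 1 = (p 1 - q 1) + (f (p 0) - f (q 0)) := by
      rw [E2_sub_apply, hh1, hh1]; ring
    have c0 : |p 0 - q 0| ≤ ‖p - q‖ := by rw [← E2_sub_apply]; exact coord_le_norm _ _
    have c1 : |p 1 - q 1| ≤ ‖p - q‖ := by rw [← E2_sub_apply]; exact coord_le_norm _ _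
    calc ‖h p - h q‖ ≤ |(h p - h q) 0| + |(h p - h q) 1| := norm_le_coords _
    _ ≤ |p 0 - q 0| + (|p 1 - q 1| + |f (p 0) - f (q 0)|) := by
        rw [e0, e1]; gcongr; exact abs_add_le _ _
    _ ≤ ‖p - q‖ + (‖p - q‖ + 2 * ‖p - q‖) := by
        have h3 : |f (p 0) - f (q 0)| ≤ 2 * ‖p - q‖ := (hflip _ _).trans (by linarith)
        linarith
    _ = 4 * ‖p - q‖ := by ring
  have hlow : ∀ p q : E 2, ‖p - q‖ ≤ 4 * ‖h p - h q‖ := by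
    intro p q
    have c0 : |p 0 - q 0| ≤ ‖h p - h q‖ := by
      have : (h p - h q) 0 = p 0 - q 0 := by rw [E2_sub_apply, hh0, hh0]
      rw [← this]; exact coord_le_norm _ _
    have c1 : |p 1 - q 1| ≤ ‖h p - h q‖ + 2 * |p 0 - q 0| := by
      have e1 : p 1 - q 1 = ((h p - h q) 1) - (f (p 0) - f (q 0)) := by
        rw [E2_sub_apply, hh1, hh1]; ring
      calc |p 1 - q 1| ≤ |(h p - h q) 1| + |f (p 0) - f (q 0)| := by
            rw [e1]; exact abs_sub _ _
      _ ≤ ‖h p - h q‖ + 2 * |p 0 - q 0| := by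
          gcongr
          · exact coord_le_norm _ _
          · exact hflip _ _
    calc ‖p - q‖ ≤ |(p - q) 0| + |(p - q) 1| := norm_le_coords _
    _ = |p 0 - q 0| + |p 1 - q 1| := by rw [E2_sub_apply, E2_sub_apply]
    _ ≤ ‖h p - h q‖ + (‖h p - h q‖ + 2 * ‖h p - h q‖) := by linarith [c0, c1]
    _ = 4 * ‖h p - h q‖ := by ring
  refine ⟨1/4, 4, by norm_num, by norm_num, ?_, 1, one_pos, ?_, 1/4, by norm_num, ?_⟩
  · refine E2_ext _ _ ?_ ?_
    · exact hh0 0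
    · rw [hh1]
      show (0:ℝ) + f ((0 : E 2) 0) = 0
      rw [show ((0 : E 2) 0) = (0:ℝ) from rfl, hf0, add_zero]
  · intro x _ y _
    constructor
    · linarith [hlow x y]
    · linarith [hup x y]
  · intro z hz
    rw [mem_ball, dist_zero_right] at hz
    refine ⟨mk2 (z 0) (z 1 - f (z 0)), ?_, ?_⟩
    · rw [mem_ball, dist_zero_right]
      have h1 : ‖mk2 (z 0) (z 1 - f (z 0))‖ ≤ |z 0| + |z 1 - f (z 0)| := norm_le_coords _
      have h2 : |z 1 - f (z 0)| ≤ |z 1| + |f (z 0)| := abs_sub _ _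
      have h3 : |f (z 0)| ≤ |z 0| := by rw [hfF]; exact Fosc_abs_le _
      have h4 : |z 0| ≤ ‖z‖ := coord_le_norm _ _
      have h5 : |z 1| ≤ ‖z‖ := coord_le_norm _ _
      calc ‖mk2 (z 0) (z 1 - f (z 0))‖ ≤ 3 * ‖z‖ := by linarith
      _ < 1 := by linarith
    · refine E2_ext _ _ ?_ ?_
      · rw [hh0]; rfl
      · rw [hh1, mk2_1, mk2_0]; ring

/-! ### Part B -/

lemma partB : dimH (dirSet {p : E 2 | p 1 = 0}) = 0 := by
  refine le_antisymm ?_ zero_le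
  have hsub : dirSet {p : E 2 | p 1 = 0} ⊆ {mk2 1 0, mk2 (-1) 0} := by
    rintro a ⟨ha1, x, hxA, hxne, hx0, hxa⟩
    have hu1 : ∀ i, (‖x i‖⁻¹ • x i) 1 = 0 := by
      intro i
      rw [E2_smul_apply, hxA i, mul_zero]
    have ha10 : a 1 = 0 := by
      have hn : Tendsto (fun i => ‖(‖x i‖⁻¹ • x i) - a‖) atTop (𝓝 0) :=
        tendsto_iff_norm_sub_tendsto_zero.1 hxa
      have hb : ∀ i, |a 1| ≤ ‖(‖x i‖⁻¹ • x i) - a‖ := by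
        intro i
        have e : ((‖x i‖⁻¹ • x i) - a) 1 = - a 1 := by
          rw [E2_sub_apply, hu1 i]; ring
        calc |a 1| = |((‖x i‖⁻¹ • x i) - a) 1| := by rw [e, abs_neg]
        _ ≤ _ := coord_le_norm _ _
      have := ge_of_tendsto' hn hb
      have := abs_nonneg (a 1)
      have : |a 1| = 0 := le_antisymm ‹|a 1| ≤ 0› ‹0 ≤ |a 1|›
      exact abs_eq_zero.1 this
    have habs : |a 0| = 1 := by
      have := norm_E2 a
      rw [ha1, ha10] at this
      have h2 : Real.sqrt ((a 0)^2) = 1 := by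
        have e : (a 0)^2 = (a 0)^2 + 0^2 := by ring
        rw [e, ← this]
      rwa [Real.sqrt_sq_eq_abs] at h2
    rcases abs_eq (by norm_num : (0:ℝ) ≤ 1) |>.1 habs with h | h
    · left; exact E2_ext _ _ h ha10
    · right; exact E2_ext _ _ h ha10
  calc dimH (dirSet {p : E 2 | p 1 = 0}) ≤ dimH {mk2 1 0, mk2 (-1) 0} := dimH_mono hsub
  _ = 0 := Set.Countable.dimH_zero ((countable_singleton _).insert _)

/-! ### Part C -/

lemma proj1_lip : LipschitzWith 1 (fun p : E 2 => p 1) := by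
  apply LipschitzWith.of_dist_le_mul
  intro p q
  rw [Real.dist_eq, dist_eq_norm]
  have : p 1 - q 1 = (p - q) 1 := (E2_sub_apply p q 1).symm
  rw [this]
  simpa using coord_le_norm (p - q) 1


lemma dir_mem (f : ℝ → ℝ) (hf0 : f 0 = 0)
    (hf : ∀ x : ℝ, x ≠ 0 → f x = x * Real.sin (Real.log |x|))
    (h : E 2 → E 2)
    (hh : ∀ p : E 2, h p = toE 2 (fun i => if i = 0 then p 0 else p 1 + f (p 0)))
    (s : ℝ) (hs : s ∈ Icc (-1:ℝ) 1) :
    (‖mk2 1 s‖⁻¹ • mk2 1 s) ∈ dirSet (h '' {p : E 2 | p 1 = 0}) := by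
  have hfF : ∀ x, f x = Fosc x := by
    intro x
    rcases eq_or_ne x 0 with rfl | hx
    · rw [hf0, Fosc_zero]
    · rw [hf x hx]; rfl
  have hh0 : ∀ p : E 2, h p 0 = p 0 := fun p => by rw [hh]; rfl
  have hh1 : ∀ p : E 2, h p 1 = p 1 + f (p 0) := fun p => by rw [hh]; rfl
  have hnv : ‖mk2 1 s‖ = Real.sqrt (1 + s^2) := by
    rw [norm_E2]; congr 1; rw [mk2_0, mk2_1]; ring
  have hnvpos : 0 < ‖mk2 1 s‖ := by
    rw [hnv]; exact Real.sqrt_pos.2 (by positivity)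
  have htpos : ∀ n : ℕ, 0 < Real.exp (Real.arcsin s - (n+1 : ℝ) * (2 * Real.pi)) :=
    fun n => Real.exp_pos _
  refine ⟨?_, fun n => Real.exp (Real.arcsin s - (n+1 : ℝ) * (2 * Real.pi)) • mk2 1 s,
    fun n => ?_, fun n hzero => ?_, ?_, ?_⟩
  · rw [norm_smul, norm_inv, norm_norm, inv_mul_cancel₀ hnvpos.ne']
  · -- membership
    show Real.exp (Real.arcsin s - (n+1 : ℝ) * (2 * Real.pi)) • mk2 1 s ∈ _
    refine ⟨mk2 (Real.exp (Real.arcsin s - (n+1 : ℝ) * (2 * Real.pi))) 0, rfl, ?_⟩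
    refine E2_ext _ _ ?_ ?_
    · rw [hh0, E2_smul_apply, mk2_0, mk2_0, mul_one]
    · rw [hh1, mk2_1, mk2_0, E2_smul_apply, mk2_1, zero_add]
      rw [hfF, Fosc, abs_of_pos (htpos n)]
      simp only [Real.log_exp]
      have hsin : Real.sin (Real.arcsin s - (n+1 : ℝ) * (2 * Real.pi)) = s := by
        have := Real.sin_sub_int_mul_two_pi (Real.arcsin s) (n+1)
        push_cast at this
        rw [this, Real.sin_arcsin hs.1 hs.2]
      rw [hsin]
  · -- nonzero
    have h0 : (Real.exp (Real.arcsin s - (n+1 : ℝ) * (2 * Real.pi)) • mk2 1 s) 0 = (0 : E 2) 0 := by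
      exact congrArg (fun v : E 2 => v 0) hzero
    rw [E2_smul_apply, mk2_0, mul_one, E2_zero_apply] at h0
    exact (htpos n).ne' h0
  · -- tendsto 0
    have harg : Tendsto (fun n : ℕ => Real.arcsin s - (n+1 : ℝ) * (2 * Real.pi)) atTop atBot := by
      have h1 : Tendsto (fun n : ℕ => (n:ℝ)) atTop atTop := tendsto_natCast_atTop_atTop
      have h2 : Tendsto (fun n : ℕ => ((n:ℝ)+1) * (2 * Real.pi)) atTop atTop :=
        (tendsto_atTop_add_const_right atTop 1 h1).atTop_mul_const (by positivity)
      have h3 : Tendsto (fun n : ℕ => -(((n:ℝ)+1) * (2 * Real.pi))) atTop atBot :=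
        tendsto_neg_atTop_atBot.comp h2
      have h4 := tendsto_atBot_add_const_left atTop (Real.arcsin s) h3
      refine h4.congr (fun n => by ring)
    have ht0 : Tendsto (fun n : ℕ => Real.exp (Real.arcsin s - (n+1 : ℝ) * (2 * Real.pi)))
        atTop (𝓝 0) := Real.tendsto_exp_atBot.comp harg
    have := ht0.smul_const (mk2 1 s)
    rwa [zero_smul] at this
  · -- normalized constant
    have hconst : ∀ n : ℕ,
        (‖Real.exp (Real.arcsin s - (n+1 : ℝ) * (2 * Real.pi)) • mk2 1 s‖)⁻¹ •
          (Real.exp (Real.arcsin s - (n+1 : ℝ) * (2 * Real.pi)) • mk2 1 s)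
        = ‖mk2 1 s‖⁻¹ • mk2 1 s := by
      intro n
      rw [norm_smul, Real.norm_eq_abs, abs_of_pos (htpos n), smul_smul]
      congr 1
      have := (htpos n).ne'
      field_simp
    exact tendsto_const_nhds.congr (fun n => (hconst n).symm)

lemma partC (f : ℝ → ℝ) (hf0 : f 0 = 0) (hf : ∀ x : ℝ, x ≠ 0 → f x = x * Real.sin (Real.log |x|))
    (h : E 2 → E 2)
    (hh : ∀ p : E 2, h p = toE 2 (fun i => if i = 0 then p 0 else p 1 + f (p 0))) :
    dimH (dirSet (h '' {p : E 2 | p 1 = 0})) = 1 := by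
  refine le_antisymm (dimH_dirSet_le _) ?_
  have key : ∀ s : ℝ, s ∈ Icc (-1:ℝ) 1 →
      (Real.sqrt (1 + s^2))⁻¹ * s ∈ (fun p : E 2 => p 1) '' dirSet (h '' {p : E 2 | p 1 = 0}) := by
    intro s hs
    refine ⟨‖mk2 1 s‖⁻¹ • mk2 1 s, dir_mem f hf0 hf h hh s hs, ?_⟩
    show (‖mk2 1 s‖⁻¹ • mk2 1 s) 1 = _
    rw [E2_smul_apply, mk2_1]
    congr 2
    rw [norm_E2, mk2_0, mk2_1]
    congr 1
    ring
  set g : ℝ → ℝ := fun s => (Real.sqrt (1 + s^2))⁻¹ * s with hg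
  have hgcont : Continuous g := by
    apply Continuous.mul
    · apply Continuous.inv₀
      · exact Real.continuous_sqrt.comp (by continuity)
      · intro s; exact (Real.sqrt_pos.2 (by positivity)).ne'
    · exact continuous_id
  have hIVT : Icc (g (-1)) (g 1) ⊆ g '' Icc (-1) 1 :=
    intermediate_value_Icc (by norm_num) hgcont.continuousOn
  have hgneg : g (-1) < 0 := by
    have h1 : (0:ℝ) < (Real.sqrt (1 + (-1:ℝ)^2))⁻¹ := by positivity
    have : g (-1) = (Real.sqrt (1 + (-1:ℝ)^2))⁻¹ * (-1) := rfl
    rw [this]; nlinarith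
  have hgpos : 0 < g 1 := by
    have h1 : (0:ℝ) < (Real.sqrt (1 + (1:ℝ)^2))⁻¹ := by positivity
    have : g 1 = (Real.sqrt (1 + (1:ℝ)^2))⁻¹ * 1 := rfl
    rw [this]; nlinarith
  have hdim : dimH (Icc (g (-1)) (g 1)) = 1 := by
    rw [Real.dimH_of_mem_nhds (Icc_mem_nhds hgneg hgpos)]
    simp
  calc (1:ℝ≥0∞) = dimH (Icc (g (-1)) (g 1)) := hdim.symm
  _ ≤ dimH (g '' Icc (-1) 1) := dimH_mono hIVT
  _ ≤ dimH ((fun p : E 2 => p 1) '' dirSet (h '' {p : E 2 | p 1 = 0})) := by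
      apply dimH_mono
      rintro r ⟨s, hsmem, rfl⟩
      exact key s hsmem
  _ ≤ dimH (dirSet (h '' {p : E 2 | p 1 = 0})) := proj1_lip.dimH_image_le _


/-- Example 1.3 (Oscillation): `h(x,y) = (x, y + x sin(ln |x|))` is a bi-Lipschitz
homeomorphism germ at `0`, yet it changes the dimension of the direction set of the
`x`-axis from `0` to `1`. -/
theorem stmt1 :
    ∀ f : ℝ → ℝ, (f 0 = 0) → (∀ x : ℝ, x ≠ 0 → f x = x * Real.sin (Real.log |x|)) →
    ∀ h : E 2 → E 2,
      (∀ p : E 2, h p = toE 2 (fun i => if i = 0 then p 0 else p 1 + f (p 0))) →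
    ∀ A : Set (E 2), A = {p : E 2 | p 1 = 0} →
      BiLipGerm h ∧ dimH (dirSet A) = 0 ∧ dimH (dirSet (h '' A)) = 1 := by
  intro f hf0 hf h hh A hA
  subst hA
  exact ⟨partA f hf0 hf h hh, partB, partC f hf0 hf h hh⟩
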